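/- arXiv:2402.05673 — 2 statements merged into one kernel-verified Lean document; each statement's English description precedes it below -/
import Mathlib

section
/- For any separable two-qubit state ρ (a convex combination of projectors onto product unit vectors), tr(ρ Φᵢ) ≤ 1/2 for each i ∈ {1,2,3,4}, where Φᵢ = |Φᵢ⟩⟨Φᵢ| is the projector onto the i-th Bell vector. -/
open Matrix Complex BigOperators
open scoped ComplexOrder

noncomputable section

/-- Standard basis ket of ℂ⁴ -/
def ket (k : Fin 4) : Fin 4 → ℂ := fun j => if j = k then 1 else 0

/-- Tensor product of two qubit vectors, with |ij⟩ ↦ index 2i+j -/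
def tens (ψ χ : Fin 2 → ℂ) : Fin 4 → ℂ :=
  ![ψ 0 * χ 0, ψ 0 * χ 1, ψ 1 * χ 0, ψ 1 * χ 1]

/-- Outer product |v⟩⟨v| -/
def proj (v : Fin 4 → ℂ) : Matrix (Fin 4) (Fin 4) ℂ :=
  Matrix.of fun i j => v i * star (v j)

/-- A qubit vector is a unit vector -/
def unit2 (ψ : Fin 2 → ℂ) : Prop := ∑ j, Complex.normSq (ψ j) = 1

/-- The four Bell vectors -/
def Bell : Fin 4 → (Fin 4 → ℂ) :=
  ![![1 / (Real.sqrt 2 : ℂ), 0, 0, 1 / (Real.sqrt 2 : ℂ)],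
    ![1 / (Real.sqrt 2 : ℂ), 0, 0, -(1 / (Real.sqrt 2 : ℂ))],
    ![0, 1 / (Real.sqrt 2 : ℂ), 1 / (Real.sqrt 2 : ℂ), 0],
    ![0, -(1 / (Real.sqrt 2 : ℂ)), 1 / (Real.sqrt 2 : ℂ), 0]]

/-- Bell projectors Φᵢ (indexed from 0: `Phi 0` is Φ₁, etc.) -/
def Phi (i : Fin 4) : Matrix (Fin 4) (Fin 4) ℂ := proj (Bell i)

/-- Separability of a two-qubit (4×4) matrix -/
def IsSepState (ρ : Matrix (Fin 4) (Fin 4) ℂ) : Prop :=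
  ∃ (n : ℕ) (p : Fin n → ℝ) (ψ χ : Fin n → Fin 2 → ℂ),
    (∀ i, 0 ≤ p i) ∧ (∑ i, p i = 1) ∧ (∀ i, unit2 (ψ i)) ∧ (∀ i, unit2 (χ i)) ∧
    ρ = ∑ i, (p i : ℂ) • proj (tens (ψ i) (χ i))

/-- Density matrix -/
def IsState (ρ : Matrix (Fin 4) (Fin 4) ℂ) : Prop := ρ.PosSemidef ∧ ρ.trace = 1

open scoped ComplexConjugate

/-!
For a product vector `ψ ⊗ χ` the overlap `⟨Φᵢ|ψ ⊗ χ⟩` equals `(ψ₀ χ'₀ + ψ₁ χ'₁) / √2`, where `χ'`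
is `χ` acted on by a Pauli matrix (a signed permutation of its coordinates), hence again a unit
vector. Cauchy–Schwarz in `ℂ²` bounds `|⟨Φᵢ|ψ ⊗ χ⟩|²` by `1/2`, and `tr(Φᵢ ρ)` is linear in `ρ`,
so the bound passes to convex combinations.
-/

lemma normSq_mul_add_mul_le (x y z w : ℂ) :
    normSq (x * y + z * w) ≤ (normSq x + normSq z) * (normSq y + normSq w) := by
  have h_tri : ‖x * y + z * w‖ ≤ ‖x‖ * ‖y‖ + ‖z‖ * ‖w‖ := by
    simpa only [norm_mul] using norm_add_le (x * y) (z * w)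
  simp only [← Complex.sq_norm]
  have := norm_nonneg (x * y + z * w)
  nlinarith [sq_nonneg (‖x‖ * ‖w‖ - ‖z‖ * ‖y‖), norm_nonneg x, norm_nonneg y,
    norm_nonneg z, norm_nonneg w]

lemma re_trace_proj_mul_proj (u v : Fin 4 → ℂ) :
    (proj u * proj v).trace.re = normSq (star u ⬝ᵥ v) := by
  have h : (proj u * proj v).trace = (star u ⬝ᵥ v) * conj (star u ⬝ᵥ v) := by
    simp only [proj, Matrix.trace, Matrix.diag, Matrix.mul_apply, Matrix.of_apply, dotProduct,
      Fin.sum_univ_four, Pi.star_apply, map_add, map_mul, RCLike.star_def, conj_conj]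
    ring
  rw [h, mul_conj, ofReal_re]

lemma star_bell_dotProduct_tens (i : Fin 4) (ψ χ : Fin 2 → ℂ) :
    ∃ y w : ℂ, normSq y + normSq w = normSq (χ 0) + normSq (χ 1) ∧
      star (Bell i) ⬝ᵥ tens ψ χ = (Real.sqrt 2 : ℂ)⁻¹ * (ψ 0 * y + ψ 1 * w) := by
  fin_cases i
  · exact ⟨χ 0, χ 1, rfl, by simp [Bell, tens, dotProduct, Fin.sum_univ_four]; ring⟩
  · exact ⟨χ 0, -χ 1, by rw [normSq_neg],
      by simp [Bell, tens, dotProduct, Fin.sum_univ_four]; ring⟩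
  · exact ⟨χ 1, χ 0, add_comm _ _, by simp [Bell, tens, dotProduct, Fin.sum_univ_four]; ring⟩
  · exact ⟨-χ 1, χ 0, by rw [normSq_neg, add_comm],
      by simp [Bell, tens, dotProduct, Fin.sum_univ_four]; ring⟩

lemma normSq_inv_sqrt_two : normSq (Real.sqrt 2 : ℂ)⁻¹ = 1 / 2 := by
  rw [map_inv₀, normSq_ofReal, Real.mul_self_sqrt zero_le_two, one_div]

lemma re_trace_Phi_mul_proj_tens_le (i : Fin 4) {ψ χ : Fin 2 → ℂ} (hψ : unit2 ψ)
    (hχ : unit2 χ) : (Phi i * proj (tens ψ χ)).trace.re ≤ 1 / 2 := by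
  obtain ⟨y, w, hyw, h_overlap⟩ := star_bell_dotProduct_tens i ψ χ
  rw [unit2, Fin.sum_univ_two] at hψ hχ
  rw [Phi, re_trace_proj_mul_proj, h_overlap, normSq_mul, normSq_inv_sqrt_two]
  have := normSq_mul_add_mul_le (ψ 0) y (ψ 1) w
  rw [hψ, hyw, hχ, one_mul] at this
  linarith

lemma re_trace_mul_sum_smul {n : ℕ} (A : Matrix (Fin 4) (Fin 4) ℂ) (p : Fin n → ℝ)
    (B : Fin n → Matrix (Fin 4) (Fin 4) ℂ) :
    (A * ∑ j, (p j : ℂ) • B j).trace.re = ∑ j, p j * (A * B j).trace.re := by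
  simp only [Finset.mul_sum, Matrix.mul_smul, Matrix.trace_sum, Matrix.trace_smul, re_sum,
    smul_eq_mul, re_ofReal_mul]

/-- separable states have overlap at most 1/2 with each Bell projector. -/
theorem sep_bell_fidelity_le_half (ρ : Matrix (Fin 4) (Fin 4) ℂ) (hρ : IsSepState ρ)
    (i : Fin 4) : ((Phi i * ρ).trace).re ≤ 1 / 2 := by
  obtain ⟨n, p, ψ, χ, hp, hp_sum, hψ, hχ, rfl⟩ := hρ
  calc (Phi i * ∑ j, (p j : ℂ) • proj (tens (ψ j) (χ j))).trace.re
      = ∑ j, p j * (Phi i * proj (tens (ψ j) (χ j))).trace.re := re_trace_mul_sum_smul _ _ _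
    _ ≤ ∑ j, p j * (1 / 2) := Finset.sum_le_sum fun j _ =>
        mul_le_mul_of_nonneg_left (re_trace_Phi_mul_proj_tens_le i (hψ j) (hχ j)) (hp j)
    _ = 1 / 2 := by rw [← Finset.sum_mul, hp_sum, one_mul]
end
end

section
/- Let Λ be a linear trace-preserving positive map on 4×4 matrices that maps separable states to separable states. If for λ ∈ (1/2,1] the equation λΛ(Φ₁) + (1−λ)Λ(|01⟩⟨01|) = λΦ₁ + (1−λ)Φ₃ holds, then tr(Φ₁Λ(Φ₁)) ≥ (3λ−1)/(2λ). -/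
open Matrix Complex BigOperators
open scoped ComplexOrder

noncomputable section

lemma sqrt2c : (1 / (Real.sqrt 2 : ℂ)) * star (1 / (Real.sqrt 2 : ℂ)) = 1/2 := by
  have h : ((Real.sqrt 2 : ℝ) : ℂ) * ((Real.sqrt 2 : ℝ) : ℂ) = 2 := by
    rw [← Complex.ofReal_mul, Real.mul_self_sqrt (by norm_num)]; norm_num
  have hs : star (1 / (Real.sqrt 2 : ℂ)) = 1 / (Real.sqrt 2 : ℂ) := by
    simp [Complex.star_def, Complex.conj_ofReal]
  rw [hs, div_mul_div_comm, one_mul, h]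

lemma trPhi0 (M : Matrix (Fin 4) (Fin 4) ℂ) :
    (Phi 0 * M).trace = (1/2 : ℂ) * (M 0 0 + M 0 3 + M 3 0 + M 3 3) := by
  have h := sqrt2c
  simp only [Matrix.trace, Matrix.diag, Matrix.mul_apply, Fin.sum_univ_four, Phi, proj, Bell,
    Matrix.of_apply, Matrix.cons_val_zero, Matrix.cons_val_one, Matrix.head_cons,
    Matrix.cons_val_two, Matrix.cons_val_three, Matrix.tail_cons, Fin.isValue, star_zero,
    mul_zero, zero_mul]
  linear_combination (M 0 0 + M 0 3 + M 3 0 + M 3 3) * h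

lemma trPhi0Phi0 : (Phi 0 * Phi 0).trace = 1 := by
  have h := sqrt2c
  rw [trPhi0]
  simp only [Phi, proj, Bell, Matrix.of_apply, Matrix.cons_val_zero, Matrix.cons_val_one,
    Matrix.head_cons, Matrix.cons_val_two, Matrix.cons_val_three, Matrix.tail_cons, Fin.isValue]
  linear_combination 2 * h

lemma trPhi0Phi2 : (Phi 0 * Phi 2).trace = 0 := by
  rw [trPhi0]
  simp only [Phi, proj, Bell, Matrix.of_apply, Matrix.cons_val_zero, Matrix.cons_val_one,
    Matrix.head_cons, Matrix.cons_val_two, Matrix.cons_val_three, Matrix.tail_cons, Fin.isValue,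
    star_zero, mul_zero, zero_mul]
  ring

lemma cauchy2 (a b c d : ℂ) :
    Complex.normSq (a * c + b * d) ≤
      (Complex.normSq a + Complex.normSq b) * (Complex.normSq c + Complex.normSq d) := by
  have key : (Complex.normSq a + Complex.normSq b) * (Complex.normSq c + Complex.normSq d)
      - Complex.normSq (a * c + b * d) = Complex.normSq (star a * d - star b * c) := by
    simp only [Complex.normSq_apply, Complex.mul_re, Complex.mul_im, Complex.add_re,
      Complex.add_im, Complex.sub_re, Complex.sub_im, Complex.star_def, Complex.conj_re,
      Complex.conj_im]
    ring
  nlinarith [Complex.normSq_nonneg (star a * d - star b * c)]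

lemma prod_bound (ψ χ : Fin 2 → ℂ) (hψ : unit2 ψ) (hχ : unit2 χ) :
    ((Phi 0 * proj (tens ψ χ)).trace).re ≤ 1 / 2 ∧
      0 ≤ ((Phi 0 * proj (tens ψ χ)).trace).re := by
  rw [trPhi0]
  have hw : proj (tens ψ χ) 0 0 + proj (tens ψ χ) 0 3 + proj (tens ψ χ) 3 0
      + proj (tens ψ χ) 3 3
      = (Complex.normSq (ψ 0 * χ 0 + ψ 1 * χ 1) : ℝ) := by
    simp only [proj, tens, Matrix.of_apply, Matrix.cons_val_zero, Matrix.cons_val_three,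
      Matrix.cons_val_one, Matrix.head_cons, Matrix.tail_cons, Fin.isValue]
    simp only [Complex.star_def]
    rw [← Complex.mul_conj, map_add]
    ring
  rw [hw]
  have hns : Complex.normSq (ψ 0 * χ 0 + ψ 1 * χ 1) ≤ 1 := by
    have := cauchy2 (ψ 0) (ψ 1) (χ 0) (χ 1)
    have h1 : Complex.normSq (ψ 0) + Complex.normSq (ψ 1) = 1 := by
      simpa [unit2, Fin.sum_univ_two] using hψ
    have h2 : Complex.normSq (χ 0) + Complex.normSq (χ 1) = 1 := by
      simpa [unit2, Fin.sum_univ_two] using hχ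
    rw [h1, h2, one_mul] at this
    exact this
  have hre : ((1/2 : ℂ) * ((Complex.normSq (ψ 0 * χ 0 + ψ 1 * χ 1) : ℝ) : ℂ)).re
      = Complex.normSq (ψ 0 * χ 0 + ψ 1 * χ 1) / 2 := by
    rw [show (1/2 : ℂ) = ((1/2 : ℝ) : ℂ) by norm_num, ← Complex.ofReal_mul]
    simp [Complex.ofReal_re]; ring
  rw [hre]
  constructor
  · linarith
  · have := Complex.normSq_nonneg (ψ 0 * χ 0 + ψ 1 * χ 1)
    linarith

lemma sep_bound (σ : Matrix (Fin 4) (Fin 4) ℂ) (h : IsSepState σ) :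
    ((Phi 0 * σ).trace).re ≤ 1 / 2 := by
  obtain ⟨n, p, ψ, χ, hp, hps, hψ, hχ, hσ⟩ := h
  subst hσ
  rw [Matrix.mul_sum]
  rw [Matrix.trace_sum]
  have : (∑ i, ((Phi 0) * ((p i : ℂ) • proj (tens (ψ i) (χ i)))).trace).re
      = ∑ i, p i * ((Phi 0 * proj (tens (ψ i) (χ i))).trace).re := by
    rw [Complex.re_sum]
    refine Finset.sum_congr rfl fun i _ => ?_
    rw [Matrix.mul_smul, Matrix.trace_smul]
    simp [Complex.mul_re]
  rw [this]
  calc ∑ i, p i * ((Phi 0 * proj (tens (ψ i) (χ i))).trace).re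
      ≤ ∑ i, p i * (1/2) := by
        refine Finset.sum_le_sum fun i _ => ?_
        exact mul_le_mul_of_nonneg_left (prod_bound (ψ i) (χ i) (hψ i) (hχ i)).1 (hp i)
    _ = 1/2 := by rw [← Finset.sum_mul, hps, one_mul]

lemma ket1_sep : IsSepState (proj (ket 1)) := by
  refine ⟨1, fun _ => 1, fun _ => ![1, 0], fun _ => ![0, 1], fun _ => zero_le_one, by simp,
    fun _ => ?_, fun _ => ?_, ?_⟩
  · simp [unit2, Fin.sum_univ_two]
  · simp [unit2, Fin.sum_univ_two]
  · have ht : tens ![1, 0] ![0, 1] = ket 1 := by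
      funext j
      fin_cases j <;> simp [tens, ket]
    simp [Fin.sum_univ_one, ht]

theorem trace_phi1_lower_bound
    (Λ : Matrix (Fin 4) (Fin 4) ℂ →ₗ[ℂ] Matrix (Fin 4) (Fin 4) ℂ)
    (htr : ∀ ρ, (Λ ρ).trace = ρ.trace)
    (hpos : ∀ ρ, ρ.PosSemidef → (Λ ρ).PosSemidef)
    (hne : ∀ ρ, IsSepState ρ → IsSepState (Λ ρ))
    (l : ℝ) (hl : 1 / 2 < l) (hl1 : l ≤ 1)
    (heq : (l : ℂ) • Λ (Phi 0) + ((1 - l : ℝ) : ℂ) • Λ (proj (ket 1))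
      = (l : ℂ) • Phi 0 + ((1 - l : ℝ) : ℂ) • Phi 2) :
    (3 * l - 1) / (2 * l) ≤ ((Phi 0 * Λ (Phi 0)).trace).re := by
  set t := ((Phi 0 * Λ (Phi 0)).trace).re with ht'
  set s := ((Phi 0 * Λ (proj (ket 1))).trace).re with hs'
  have hs : s ≤ 1 / 2 := sep_bound _ (hne _ ket1_sep)
  have hkey : l * t + (1 - l) * s = l := by
    have h1 := congrArg (fun M => ((Phi 0 * M).trace).re) heq
    simp only [Matrix.mul_add, Matrix.mul_smul, Matrix.trace_add, Matrix.trace_smul,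
      smul_eq_mul] at h1
    rw [trPhi0Phi0, trPhi0Phi2] at h1
    simpa [Complex.add_re, Complex.mul_re, Complex.ofReal_re, Complex.ofReal_im] using h1
  have hl0 : (0:ℝ) < 2 * l := by linarith
  rw [div_le_iff₀ hl0]
  nlinarith [hs, hkey]
end
end
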